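/- For all integers a ≥ 1 and b ≥ 0, the following matrix identity holds: ![![0,0,1],![1,0,−a],![0,1,−b]] = (B · A₀⁻¹ · A₁^{−b} · (A₁·P_{(2 3)})^{−2(a−1)} · B⁻¹)ᵀ. Hence the Güting map, given on the triangle by (x,y) ↦ ((y/x), (1−ax−by)/x) with a the positive integer satisfying 1−ax ≥ 0 > 1−(a+1)x and b the nonnegative integer satisfying 1−ax−by ≥ 0 > 1−ax−(b+1)y, is a Combo TRIP map built from T_{(e,e,e)} and T_{(e,(1 2 3),e)}. -/
import Mathlib


open Matrix

noncomputable section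

def A0 : Matrix (Fin 3) (Fin 3) ℚ := !![0,0,1; 1,0,0; 0,1,1]
def A1 : Matrix (Fin 3) (Fin 3) ℚ := !![1,0,1; 0,1,0; 0,0,1]
def Bm : Matrix (Fin 3) (Fin 3) ℚ := !![1,1,1; 0,1,1; 0,0,1]
/-- the permutation matrix of (2 3) -/
def P23 : Matrix (Fin 3) (Fin 3) ℚ := !![1,0,0; 0,0,1; 0,1,0]

lemma A1_inv : A1⁻¹ = !![1,0,-1; 0,1,0; 0,0,1] := by
  apply inv_eq_right_inv
  norm_num [A1, Matrix.mul_fin_three]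
  exact Matrix.one_fin_three.symm

lemma A0_inv : A0⁻¹ = !![0,1,0; -1,0,1; 1,0,0] := by
  apply inv_eq_right_inv
  norm_num [A0, Matrix.mul_fin_three]
  exact Matrix.one_fin_three.symm

lemma Bm_inv : Bm⁻¹ = !![1,-1,0; 0,1,-1; 0,0,1] := by
  apply inv_eq_right_inv
  norm_num [Bm, Matrix.mul_fin_three]
  exact Matrix.one_fin_three.symm

lemma A1P23_inv : (A1 * P23)⁻¹ = !![1,0,-1; 0,0,1; 0,1,0] := by
  apply inv_eq_right_inv
  norm_num [A1, P23, Matrix.mul_fin_three]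
  exact Matrix.one_fin_three.symm

lemma A1_inv_pow (b : ℕ) : (A1⁻¹) ^ b = !![1,0,-(b:ℚ); 0,1,0; 0,0,1] := by
  induction b with
  | zero => rw [pow_zero, Matrix.one_fin_three]; norm_num
  | succ n ih =>
      rw [pow_succ, ih, A1_inv]
      push_cast
      norm_num [Matrix.mul_fin_three]

lemma A1P23_inv_pow (k : ℕ) :
    ((A1 * P23)⁻¹) ^ (2 * k) = !![1,-(k:ℚ),-(k:ℚ); 0,1,0; 0,0,1] := by
  induction k with
  | zero => rw [pow_zero, Matrix.one_fin_three]; norm_num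
  | succ n ih =>
      have : 2 * (n + 1) = 2 * n + 1 + 1 := by ring
      rw [this, pow_succ, pow_succ, ih, A1P23_inv]
      push_cast
      norm_num [Matrix.mul_fin_three]

/-- The Güting map is a Combo TRIP map built from `T_{(e,e,e)}` and `T_{(e,(1 2 3),e)}`:
for all integers `a ≥ 1` and `b ≥ 0`,
`![![0,0,1],![1,0,−a],![0,1,−b]] = (B·A₀⁻¹·A₁^{−b}·(A₁·P_{(2 3)})^{−2(a−1)}·B⁻¹)ᵀ`. -/
theorem guting_matrix_identity (a b : ℕ) (ha : 1 ≤ a) :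
    !![0,0,1; 1,0,-(a : ℚ); 0,1,-(b : ℚ)] =
      (Bm * A0⁻¹ * (A1⁻¹) ^ b * ((A1 * P23)⁻¹) ^ (2 * (a - 1)) * Bm⁻¹)ᵀ := by
  obtain ⟨k, rfl⟩ := Nat.exists_eq_add_of_le ha
  rw [A0_inv, Bm_inv, A1_inv_pow, A1P23_inv_pow]
  simp only [Nat.add_sub_cancel_left, Bm]
  push_cast
  norm_num [Matrix.mul_fin_three]
  ext i j
  fin_cases i <;> fin_cases j <;>
    simp [Matrix.transpose_apply, Matrix.vecHead, Matrix.vecTail] <;> ring
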